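/- arXiv:2511.09930 — 2 statements merged into one kernel-verified Lean document; each statement's English description precedes it below -/
import Mathlib

section
/- Let ε > 0 and g_ε : [0,∞) → [0,1] be a C¹ function with g_ε(t) = 1 for t ≤ e^{-2/ε}, g_ε(t) = 0 for t ≥ e^{-1/ε}, and −3ε/t ≤ g_ε'(t) ≤ 0 for all t > 0. Let Θ : (0,∞) → [0,∞) be nondecreasing with Θ(r) ≤ bπr² for all r ∈ (0,1] and some b > 0. Then 2∫_{e^{-2/ε}}^{e^{-1/ε}} 9ε² r^{-2} dΘ(r) ≤ 18bπ(ε² + 2ε), and in particular this quantity tends to 0 as ε → 0. -/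
/-! By the layer-cake formula, `∫ r⁻² dμ = ∫₀^∞ μ{r⁻² > t} dt` for `μ = dF` restricted to `(a, B]`.
The superlevel set at height `t` lies in `(a, min B t^{-1/2}]`, so the growth bound `F r ≤ C r²`
together with `F a ≥ 0` gives `μ{r⁻² > t} ≤ C · min B² t⁻¹`, and the set is empty for `t ≥ a⁻²`.
Integrating in `t` yields `C + 2 C log (B / a)`; for `a = e^{-2/ε}`, `B = e^{-1/ε}` this is
`C (1 + 2 / ε)`, and the factor `9 ε²` turns it into `9 C (ε² + 2 ε) → 0`. -/

open MeasureTheory Filter Topology Set Real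

lemma lintegral_Ioo_ofReal_mul_inv {C u v : ℝ} (hC : 0 ≤ C) (hu : 0 < u) (huv : u ≤ v) :
    ∫⁻ t in Ioo u v, ENNReal.ofReal (C * t⁻¹) = ENNReal.ofReal (C * log (v / u)) := by
  have hint : IntegrableOn (fun t : ℝ => C * t⁻¹) (Ioc u v) :=
    (intervalIntegrable_iff_integrableOn_Ioc_of_le huv).1
      ((continuousOn_const.mul (continuousOn_inv₀.mono fun t ht => by
        rw [uIcc_of_le huv] at ht; exact (hu.trans_le ht.1).ne')).intervalIntegrable)
  rw [← ofReal_integral_eq_lintegral_ofReal (hint.mono_set Ioo_subset_Ioc_self)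
      (ae_restrict_of_forall_mem measurableSet_Ioo fun t ht => by
        have := hu.trans ht.1; positivity),
    ← integral_Ioc_eq_integral_Ioo, ← intervalIntegral.integral_of_le huv,
    intervalIntegral.integral_const_mul, integral_inv_of_pos hu (hu.trans_le huv)]

namespace StieltjesFunction

variable (F : StieltjesFunction ℝ) {a B C : ℝ}

lemma measure_Ioc_le_ofReal_mul_sq {c : ℝ} (hFa : 0 ≤ F a) (hFc : F c ≤ C * c ^ 2) :
    F.measure (Ioc a c) ≤ ENNReal.ofReal (C * c ^ 2) := by
  rw [F.measure_Ioc]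
  exact ENNReal.ofReal_le_ofReal (by linarith)

lemma measure_inv_sq_superlevel_le (ha : 0 < a) (haB : a < B) (hFa : 0 ≤ F a)
    (hF : ∀ r ∈ Ioc a B, F r ≤ C * r ^ 2) {t : ℝ} (ht : 0 < t) :
    F.measure ({r | t < (r ^ 2)⁻¹} ∩ Ioc a B) ≤
      (Ioc 0 (B ^ 2)⁻¹).indicator (fun _ => ENNReal.ofReal (C * B ^ 2)) t +
      (Ioo (B ^ 2)⁻¹ (a ^ 2)⁻¹).indicator (fun t => ENNReal.ofReal (C * t⁻¹)) t := by
  rcases le_or_gt t (B ^ 2)⁻¹ with htB | htB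
  · rw [indicator_of_mem (mem_Ioc.2 ⟨ht, htB⟩)]
    calc _ ≤ F.measure (Ioc a B) := measure_mono inter_subset_right
      _ ≤ _ := F.measure_Ioc_le_ofReal_mul_sq hFa (hF B ⟨haB, le_rfl⟩)
      _ ≤ _ := le_self_add
  rw [indicator_of_notMem (fun h => htB.not_ge h.2), zero_add]
  rcases lt_or_ge t (a ^ 2)⁻¹ with hta | hta
  · rw [indicator_of_mem (mem_Ioo.2 ⟨htB, hta⟩)]
    set c := (√t)⁻¹
    have hc2 : c ^ 2 = t⁻¹ := by rw [inv_pow, sq_sqrt ht.le]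
    have hc : 0 < c := by positivity
    have hac : a < c := by
      refine lt_of_pow_lt_pow_left₀ 2 hc.le ?_
      rw [hc2]; exact (lt_inv_comm₀ ht (by positivity)).1 hta
    have hcB : c < B := by
      refine lt_of_pow_lt_pow_left₀ 2 (ha.trans haB).le ?_
      rw [hc2]; exact (inv_lt_comm₀ (pow_pos (ha.trans haB) 2) ht).1 htB
    have hsub : {r | t < (r ^ 2)⁻¹} ∩ Ioc a B ⊆ Ioc a c := by
      rintro r ⟨hrt, har, -⟩
      have hr : 0 < r := ha.trans har
      refine ⟨har, (lt_of_pow_lt_pow_left₀ 2 hc.le ?_).le⟩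
      rw [hc2]; exact (lt_inv_comm₀ ht (by positivity)).1 hrt
    calc _ ≤ F.measure (Ioc a c) := measure_mono hsub
      _ ≤ ENNReal.ofReal (C * c ^ 2) := F.measure_Ioc_le_ofReal_mul_sq hFa (hF c ⟨hac, hcB.le⟩)
      _ = _ := by rw [hc2]
  · rw [indicator_of_notMem (fun h => h.2.not_ge hta)]
    have hempty : {r | t < (r ^ 2)⁻¹} ∩ Ioc a B = ∅ := by
      refine eq_empty_of_forall_notMem fun r ⟨hrt, har, _⟩ => ?_
      have hr : 0 < r := ha.trans har
      have : (r ^ 2)⁻¹ < (a ^ 2)⁻¹ := (inv_lt_inv₀ (by positivity) (by positivity)).2 (by nlinarith)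
      exact (hrt.trans this).not_ge hta
    rw [hempty, measure_empty]

theorem integral_inv_sq_le (ha : 0 < a) (haB : a < B) (hFa : 0 ≤ F a)
    (hF : ∀ r ∈ Ioc a B, F r ≤ C * r ^ 2) :
    ∫ r in Ioc a B, (r ^ 2)⁻¹ ∂F.measure ≤ C * (1 + 2 * log (B / a)) := by
  have hB : 0 < B := ha.trans haB
  have hC : 0 ≤ C := nonneg_of_mul_nonneg_left
    ((hFa.trans (F.mono haB.le)).trans (hF B ⟨haB, le_rfl⟩)) (by positivity)
  have hlog : 0 ≤ log (B / a) := log_nonneg ((one_le_div ha).2 haB.le)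
  have hnn : ∀ r : ℝ, 0 ≤ (r ^ 2)⁻¹ := fun r => by positivity
  have hmeas : Measurable fun r : ℝ => (r ^ 2)⁻¹ := by fun_prop
  rw [integral_eq_lintegral_of_nonneg_ae (.of_forall hnn) hmeas.aestronglyMeasurable,
    lintegral_eq_lintegral_meas_lt _ (.of_forall hnn) hmeas.aemeasurable]
  refine ENNReal.toReal_le_of_le_ofReal (by positivity) ?_
  have hBa : (B ^ 2)⁻¹ ≤ (a ^ 2)⁻¹ := inv_anti₀ (by positivity) (by nlinarith)
  calc _ ≤ ∫⁻ t in Ioi 0,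
          (Ioc 0 (B ^ 2)⁻¹).indicator (fun _ => ENNReal.ofReal (C * B ^ 2)) t +
          (Ioo (B ^ 2)⁻¹ (a ^ 2)⁻¹).indicator (fun t => ENNReal.ofReal (C * t⁻¹)) t :=
        setLIntegral_mono' _root_.measurableSet_Ioi fun t ht => by
          rw [Measure.restrict_apply' measurableSet_Ioc]
          exact F.measure_inv_sq_superlevel_le ha haB hFa hF ht
    _ = ENNReal.ofReal C + ENNReal.ofReal (C * log ((a ^ 2)⁻¹ / (B ^ 2)⁻¹)) := by
        rw [lintegral_add_left (measurable_const.indicator measurableSet_Ioc),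
          lintegral_indicator measurableSet_Ioc, lintegral_indicator measurableSet_Ioo,
          Measure.restrict_restrict measurableSet_Ioc, Measure.restrict_restrict measurableSet_Ioo,
          Ioc_inter_Ioi, max_self,
          inter_eq_left.2 (Ioo_subset_Ioi_self.trans (Ioi_subset_Ioi (by positivity))),
          setLIntegral_const, volume_Ioc, sub_zero, ← ENNReal.ofReal_mul' (by positivity),
          mul_inv_cancel_right₀ (by positivity),
          lintegral_Ioo_ofReal_mul_inv hC (by positivity) hBa]
    _ = ENNReal.ofReal (C * (1 + 2 * log (B / a))) := by
        rw [inv_div_inv, ← div_pow, log_pow,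
          ← ENNReal.ofReal_add hC (mul_nonneg hC (mul_nonneg (by positivity) hlog))]
        push_cast
        ring_nf

end StieltjesFunction

theorem stmt_8_general (b : ℝ) (Θ : StieltjesFunction ℝ)
    (hΘ0 : ∀ r > (0 : ℝ), 0 ≤ Θ r)
    (hΘb : ∀ r ∈ Set.Ioc (0 : ℝ) 1, Θ r ≤ b * Real.pi * r ^ 2) :
    (∀ ε > (0 : ℝ), ∀ g : ℝ → ℝ,
      (∀ t, g t ∈ Set.Icc (0 : ℝ) 1) →
      (∀ t ≤ Real.exp (-2 / ε), g t = 1) →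
      (∀ t, Real.exp (-1 / ε) ≤ t → g t = 0) →
      (∀ t > (0 : ℝ), HasDerivAt g (deriv g t) t ∧
        -3 * ε / t ≤ deriv g t ∧ deriv g t ≤ 0) →
      2 * ∫ r in Set.Ioc (Real.exp (-2 / ε)) (Real.exp (-1 / ε)),
          9 * ε ^ 2 / r ^ 2 ∂Θ.measure
        ≤ 18 * b * Real.pi * (ε ^ 2 + 2 * ε)) ∧
    Tendsto (fun ε : ℝ =>
        2 * ∫ r in Set.Ioc (Real.exp (-2 / ε)) (Real.exp (-1 / ε)),
          9 * ε ^ 2 / r ^ 2 ∂Θ.measure)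
      (nhdsWithin 0 (Set.Ioi 0)) (𝓝 0) := by
  have hbound : ∀ ε > (0 : ℝ), 2 * ∫ r in Ioc (exp (-2 / ε)) (exp (-1 / ε)),
      9 * ε ^ 2 / r ^ 2 ∂Θ.measure ≤ 18 * b * π * (ε ^ 2 + 2 * ε) := fun ε hε => by
    have hexp : exp (-2 / ε) < exp (-1 / ε) := exp_lt_exp.2 (by gcongr; norm_num)
    have hexp1 : exp (-1 / ε) ≤ 1 := exp_le_one_iff.2 (div_nonpos_of_nonpos_of_nonneg (by norm_num) hε.le)
    have hlog : log (exp (-1 / ε) / exp (-2 / ε)) = 1 / ε := by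
      rw [← exp_sub, log_exp]; ring
    have hint := Θ.integral_inv_sq_le (exp_pos _) hexp (hΘ0 _ (exp_pos _))
      fun r hr => hΘb r ⟨(exp_pos _).trans hr.1, hr.2.trans hexp1⟩
    rw [hlog] at hint
    calc _ = 18 * ε ^ 2 * ∫ r in Ioc (exp (-2 / ε)) (exp (-1 / ε)), (r ^ 2)⁻¹ ∂Θ.measure := by
          simp_rw [div_eq_mul_inv (9 * ε ^ 2)]; rw [integral_const_mul]; ring
      _ ≤ 18 * ε ^ 2 * (b * π * (1 + 2 * (1 / ε))) := by gcongr
      _ = _ := by field_simp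
  refine ⟨fun ε hε _ _ _ _ _ => hbound ε hε, ?_⟩
  refine squeeze_zero' (eventually_nhdsWithin_of_forall fun ε _ =>
      mul_nonneg zero_le_two (integral_nonneg fun r => by positivity))
    (eventually_nhdsWithin_of_forall hbound) ?_
  have hcont : Continuous fun ε : ℝ => 18 * b * π * (ε ^ 2 + 2 * ε) := by fun_prop
  exact (hcont.tendsto' 0 0 (by simp)).mono_left nhdsWithin_le_nhds

theorem stmt_8 (b : ℝ) (hb : 0 < b) (Θ : StieltjesFunction ℝ)
    (hΘ0 : ∀ r > (0 : ℝ), 0 ≤ Θ r)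
    (hΘb : ∀ r ∈ Set.Ioc (0 : ℝ) 1, Θ r ≤ b * Real.pi * r ^ 2) :
    (∀ ε > (0 : ℝ), ∀ g : ℝ → ℝ,
      (∀ t, g t ∈ Set.Icc (0 : ℝ) 1) →
      (∀ t ≤ Real.exp (-2 / ε), g t = 1) →
      (∀ t, Real.exp (-1 / ε) ≤ t → g t = 0) →
      (∀ t > (0 : ℝ), HasDerivAt g (deriv g t) t ∧
        -3 * ε / t ≤ deriv g t ∧ deriv g t ≤ 0) →
      2 * ∫ r in Set.Ioc (Real.exp (-2 / ε)) (Real.exp (-1 / ε)),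
          9 * ε ^ 2 / r ^ 2 ∂Θ.measure
        ≤ 18 * b * Real.pi * (ε ^ 2 + 2 * ε)) ∧
    Tendsto (fun ε : ℝ =>
        2 * ∫ r in Set.Ioc (Real.exp (-2 / ε)) (Real.exp (-1 / ε)),
          9 * ε ^ 2 / r ^ 2 ∂Θ.measure)
      (nhdsWithin 0 (Set.Ioi 0)) (𝓝 0) :=
  stmt_8_general b Θ hΘ0 hΘb
end

section
/- Let ν_f, ν_g be finite Borel measures on K and ν_{f,g} := (ν_{f+g} − ν_f − ν_g)/2 a signed measure satisfying the Cauchy–Schwarz-type bound |ν_{f,g}(A)| ≤ ν_f(A)^{1/2} ν_g(A)^{1/2} for all Borel A. Then for Borel functions φ ∈ L²(K, ν_f) and ψ ∈ L²(K, ν_g), φψ ∈ L¹(K, |ν_{f,g}|) and |∫_K φψ dν_{f,g}| ≤ (∫_K φ² dν_f)^{1/2} (∫_K ψ² dν_g)^{1/2}. -/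
/-! Splitting `A` along a Hahn decomposition of `σ` and applying Cauchy–Schwarz in `ℝ²` to the two
pieces gives `|σ|(A)² ≤ ν_f(A) ν_g(A)`. Write `|σ| = p μ`, `ν_f = F μ`, `ν_g = G μ` with
`μ = ν_f + ν_g`. For every rational `t` the function `F + 2 t p + t² G` has nonnegative integral over
every set, hence is nonnegative a.e.; so `p² ≤ F G` a.e. Then
`∫ |φ ψ| d|σ| = ∫ p |φ| |ψ| dμ ≤ ∫ (√F |φ|) (√G |ψ|) dμ`, and Cauchy–Schwarz in `L²(μ)` finishes. -/

open MeasureTheory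
open scoped ENNReal

theorem sq_le_mul_of_forall_rat_quadratic_nonneg {a b c : ℝ}
    (h : ∀ q : ℚ, 0 ≤ a + 2 * q * b + q ^ 2 * c) : b ^ 2 ≤ a * c := by
  have hreal (t : ℝ) : 0 ≤ a + 2 * t * b + t ^ 2 * c :=
    Rat.denseRange_cast.induction_on t (isClosed_le continuous_const (by fun_prop)) h
  have := discrim_le_zero (a := c) (b := 2 * b) (c := a) fun t => by linarith [hreal t]
  rw [discrim] at this
  linarith

theorem quadratic_nonneg_of_sq_le_mul {a b c : ℝ} (ha : 0 ≤ a) (hc : 0 ≤ c) (h : b ^ 2 ≤ a * c)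
    (t : ℝ) : 0 ≤ a + 2 * t * b + t ^ 2 * c := by
  rcases ha.eq_or_lt with rfl | ha
  · obtain rfl : b = 0 := pow_eq_zero_iff two_ne_zero |>.1 (by nlinarith [sq_nonneg b])
    simpa using mul_nonneg (sq_nonneg t) hc
  · refine (mul_nonneg_iff_of_pos_left ha).1 ?_
    nlinarith [sq_nonneg (a + t * b), mul_nonneg (sq_nonneg t) (sub_nonneg.2 h)]

theorem add_sq_le_mul_of_le_sqrt_mul_sqrt {x y a₁ a₂ b₁ b₂ : ℝ} (ha₁ : 0 ≤ a₁) (ha₂ : 0 ≤ a₂)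
    (hb₁ : 0 ≤ b₁) (hb₂ : 0 ≤ b₂) (hxy : 0 ≤ x + y) (hx : x ≤ √a₁ * √b₁) (hy : y ≤ √a₂ * √b₂) :
    (x + y) ^ 2 ≤ (a₁ + a₂) * (b₁ + b₂) :=
  calc (x + y) ^ 2 ≤ (√a₁ * √b₁ + √a₂ * √b₂) ^ 2 := pow_le_pow_left₀ hxy (add_le_add hx hy) 2
    _ ≤ (a₁ + a₂) * (b₁ + b₂) := by
      nlinarith [Real.sq_sqrt ha₁, Real.sq_sqrt ha₂, Real.sq_sqrt hb₁, Real.sq_sqrt hb₂,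
        sq_nonneg (√a₁ * √b₂ - √a₂ * √b₁)]

theorem ENNReal.le_add_of_sq_le_mul {a b c : ℝ≥0∞} (h : c ^ 2 ≤ a * b) : c ≤ a + b := by
  refine (ENNReal.pow_le_pow_left_iff two_ne_zero).1 (h.trans ?_)
  rw [sq]
  exact mul_le_mul' le_self_add le_add_self

namespace MeasureTheory

variable {K : Type*} [MeasurableSpace K]

theorem ae_sq_le_mul_of_forall_setIntegral_sq_le_mul {μ : Measure K} {F G H : K → ℝ}
    (hF : Integrable F μ) (hG : Integrable G μ) (hH : Integrable H μ) (hF0 : 0 ≤ F) (hG0 : 0 ≤ G)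
    (h : ∀ A, MeasurableSet A →
      (∫ x in A, H x ∂μ) ^ 2 ≤ (∫ x in A, F x ∂μ) * ∫ x in A, G x ∂μ) :
    ∀ᵐ x ∂μ, H x ^ 2 ≤ F x * G x := by
  have hq (q : ℚ) : ∀ᵐ x ∂μ, 0 ≤ F x + 2 * q * H x + q ^ 2 * G x := by
    have hFH : Integrable (fun x => F x + 2 * q * H x) μ := hF.add (hH.const_mul _)
    have hG' : Integrable (fun x => q ^ 2 * G x) μ := hG.const_mul _
    refine ae_nonneg_of_forall_setIntegral_nonneg (hFH.add hG') fun A hA _ => ?_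
    rw [integral_add hFH.restrict hG'.restrict, integral_add hF.restrict (hH.const_mul _).restrict,
      integral_const_mul, integral_const_mul]
    exact quadratic_nonneg_of_sq_le_mul (setIntegral_nonneg hA fun x _ => hF0 x)
      (setIntegral_nonneg hA fun x _ => hG0 x) (h A hA) q
  filter_upwards [ae_all_iff.2 hq] with x hx
  exact sq_le_mul_of_forall_rat_quadratic_nonneg hx

theorem lintegral_le_of_ae_sq_le_mul {μ : Measure K} {h a b : K → ℝ≥0∞}
    (ha : AEMeasurable a μ) (hb : AEMeasurable b μ) (hab : ∀ᵐ x ∂μ, h x ^ 2 ≤ a x * b x) :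
    ∫⁻ x, h x ∂μ ≤ (∫⁻ x, a x ∂μ) ^ (1 / 2 : ℝ) * (∫⁻ x, b x ∂μ) ^ (1 / 2 : ℝ) :=
  calc ∫⁻ x, h x ∂μ ≤ ∫⁻ x, (a x ^ (1 / 2 : ℝ) * b x ^ (1 / 2 : ℝ)) ∂μ := by
        refine lintegral_mono_ae (hab.mono fun x hx => ?_)
        rw [← ENNReal.mul_rpow_of_nonneg _ _ (by norm_num), one_div,
          ENNReal.le_rpow_inv_iff two_pos, ENNReal.rpow_two]
        exact hx
    _ ≤ _ := ENNReal.lintegral_mul_le_Lp_mul_Lq μ .two_two (ha.pow_const _) (hb.pow_const _)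
    _ = _ := by simp only [← ENNReal.rpow_mul]; norm_num

theorem MemLp.toReal_eLpNorm_two {ν : Measure K} {φ : K → ℝ} (hφ : MemLp φ 2 ν) :
    (eLpNorm φ 2 ν).toReal = √(∫ x, φ x ^ 2 ∂ν) := by
  rw [hφ.eLpNorm_eq_integral_rpow_norm two_ne_zero ENNReal.ofNat_ne_top,
    ENNReal.toReal_ofReal (by positivity), Real.sqrt_eq_rpow]
  simp [Real.norm_eq_abs, sq_abs]

theorem abs_integral_sub_integral_le_integral_abs_add_measure {μ ν : Measure K} {f : K → ℝ}
    (hf : Integrable f (μ + ν)) : |∫ x, f x ∂μ - ∫ x, f x ∂ν| ≤ ∫ x, |f x| ∂(μ + ν) := by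
  rw [integral_add_measure hf.left_of_add_measure.abs hf.right_of_add_measure.abs]
  exact (abs_sub _ _).trans (add_le_add abs_integral_le_integral_abs abs_integral_le_integral_abs)

theorem SignedMeasure.totalVariation_sq_le_mul {σ : SignedMeasure K} {νf νg : Measure K}
    [IsFiniteMeasure νf] [IsFiniteMeasure νg]
    (h : ∀ A, MeasurableSet A → |σ A| ≤ √(νf A).toReal * √(νg A).toReal)
    {A : Set K} (hA : MeasurableSet A) : σ.totalVariation A ^ 2 ≤ νf A * νg A := by
  obtain ⟨i, hi, hpos, hneg, hp, hn⟩ := σ.toJordanDecomposition_spec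
  have hsplit (ν : Measure K) [IsFiniteMeasure ν] :
      ν.real A = ν.real (i ∩ A) + ν.real (iᶜ ∩ A) := by
    rw [Set.inter_comm, Set.inter_comm iᶜ]
    exact (measureReal_inter_add_sdiff hi).symm
  have htv : σ.totalVariation.real A = σ (i ∩ A) + -σ (iᶜ ∩ A) := by
    rw [SignedMeasure.totalVariation, measureReal_add_apply, hp, hn,
      SignedMeasure.toMeasureOfZeroLE_real_apply _ hpos hi hA,
      SignedMeasure.toMeasureOfLEZero_real_apply _ hneg hi.compl hA]
  rw [← ENNReal.toReal_le_toReal (by finiteness) (by finiteness), ENNReal.toReal_pow,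
    ENNReal.toReal_mul]
  change σ.totalVariation.real A ^ 2 ≤ νf.real A * νg.real A
  rw [htv, hsplit νf, hsplit νg]
  exact add_sq_le_mul_of_le_sqrt_mul_sqrt measureReal_nonneg measureReal_nonneg measureReal_nonneg
    measureReal_nonneg (htv ▸ measureReal_nonneg) ((le_abs_self _).trans (h _ (hi.inter hA)))
    ((neg_le_abs _).trans (h _ (hi.compl.inter hA)))

section SqLeMul

variable {τ νf νg : Measure K}

theorem Measure.ae_rnDeriv_sq_le_mul {μ : Measure K} [IsFiniteMeasure τ]
    [IsFiniteMeasure νf] [IsFiniteMeasure νg] [SigmaFinite μ]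
    (hτ : τ ≪ μ) (hf : νf ≪ μ) (hg : νg ≪ μ) (h : ∀ A, MeasurableSet A → τ A ^ 2 ≤ νf A * νg A) :
    ∀ᵐ x ∂μ, τ.rnDeriv μ x ^ 2 ≤ νf.rnDeriv μ x * νg.rnDeriv μ x := by
  have hreal := ae_sq_le_mul_of_forall_setIntegral_sq_le_mul (μ := μ)
    (F := fun x => (νf.rnDeriv μ x).toReal) (G := fun x => (νg.rnDeriv μ x).toReal)
    Measure.integrable_toReal_rnDeriv Measure.integrable_toReal_rnDeriv
    Measure.integrable_toReal_rnDeriv (fun x => ENNReal.toReal_nonneg)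
    (fun x => ENNReal.toReal_nonneg) fun A hA => by
      rw [Measure.setIntegral_toReal_rnDeriv hτ, Measure.setIntegral_toReal_rnDeriv hf,
        Measure.setIntegral_toReal_rnDeriv hg, measureReal_def, measureReal_def, measureReal_def,
        ← ENNReal.toReal_pow, ← ENNReal.toReal_mul]
      exact ENNReal.toReal_mono (by finiteness) (h A hA)
  filter_upwards [hreal, Measure.rnDeriv_ne_top τ μ, Measure.rnDeriv_ne_top νf μ,
    Measure.rnDeriv_ne_top νg μ] with x hx hτx hfx hgx
  rwa [← ENNReal.toReal_le_toReal (by finiteness) (by finiteness), ENNReal.toReal_pow,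
    ENNReal.toReal_mul]

theorem Measure.le_add_of_sq_le_mul (h : ∀ A, MeasurableSet A → τ A ^ 2 ≤ νf A * νg A) :
    τ ≤ νf + νg :=
  Measure.le_iff.2 fun A hA => ENNReal.le_add_of_sq_le_mul (h A hA)

theorem Measure.absolutelyContinuous_left_of_sq_le_mul
    (h : ∀ A, MeasurableSet A → τ A ^ 2 ≤ νf A * νg A) : τ ≪ νf :=
  .mk fun A hA hf => by simpa [hf] using h A hA

theorem Measure.absolutelyContinuous_right_of_sq_le_mul
    (h : ∀ A, MeasurableSet A → τ A ^ 2 ≤ νf A * νg A) : τ ≪ νg :=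
  .mk fun A hA hg => by simpa [hg] using h A hA

theorem lintegral_mul_le_of_sq_le_mul [IsFiniteMeasure νf] [IsFiniteMeasure νg]
    (h : ∀ A, MeasurableSet A → τ A ^ 2 ≤ νf A * νg A)
    {f g : K → ℝ≥0∞} (hf : Measurable f) (hg : Measurable g) :
    ∫⁻ x, f x * g x ∂τ ≤ (∫⁻ x, f x ^ 2 ∂νf) ^ (1 / 2 : ℝ) * (∫⁻ x, g x ^ 2 ∂νg) ^ (1 / 2 : ℝ) := by
  have hτ := Measure.le_add_of_sq_le_mul h
  have := isFiniteMeasure_of_le _ hτ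
  have hfμ : νf ≪ νf + νg := (Measure.le_add_right le_rfl).absolutelyContinuous
  have hgμ : νg ≪ νf + νg := (Measure.le_add_left le_rfl).absolutelyContinuous
  rw [← lintegral_rnDeriv_mul hτ.absolutelyContinuous (by fun_prop),
    ← lintegral_rnDeriv_mul hfμ (by fun_prop), ← lintegral_rnDeriv_mul hgμ (by fun_prop)]
  refine lintegral_le_of_ae_sq_le_mul (by fun_prop) (by fun_prop) ?_
  filter_upwards [Measure.ae_rnDeriv_sq_le_mul hτ.absolutelyContinuous hfμ hgμ h] with x hx
  calc (τ.rnDeriv (νf + νg) x * (f x * g x)) ^ 2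
      = τ.rnDeriv (νf + νg) x ^ 2 * (f x ^ 2 * g x ^ 2) := by ring
    _ ≤ νf.rnDeriv (νf + νg) x * νg.rnDeriv (νf + νg) x * (f x ^ 2 * g x ^ 2) := by gcongr
    _ = _ := by ring

theorem eLpNorm_mul_le_of_sq_le_mul [IsFiniteMeasure νf] [IsFiniteMeasure νg]
    (h : ∀ A, MeasurableSet A → τ A ^ 2 ≤ νf A * νg A) {φ ψ : K → ℝ}
    (hφ : AEStronglyMeasurable φ νf) (hψ : AEStronglyMeasurable ψ νg) :
    eLpNorm (φ * ψ) 1 τ ≤ eLpNorm φ 2 νf * eLpNorm ψ 2 νg := by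
  have hmk : φ * ψ =ᵐ[τ] hφ.mk φ * hψ.mk ψ :=
    ((Measure.absolutelyContinuous_left_of_sq_le_mul h).ae_eq hφ.ae_eq_mk).mul
      ((Measure.absolutelyContinuous_right_of_sq_le_mul h).ae_eq hψ.ae_eq_mk)
  rw [eLpNorm_congr_ae hmk, eLpNorm_congr_ae hφ.ae_eq_mk, eLpNorm_congr_ae hψ.ae_eq_mk,
    eLpNorm_one_eq_lintegral_enorm, eLpNorm_eq_lintegral_rpow_enorm_toReal two_ne_zero
      ENNReal.ofNat_ne_top, eLpNorm_eq_lintegral_rpow_enorm_toReal two_ne_zero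
      ENNReal.ofNat_ne_top]
  simp only [Pi.mul_apply, enorm_mul, ENNReal.toReal_ofNat, ENNReal.rpow_two]
  exact lintegral_mul_le_of_sq_le_mul h hφ.stronglyMeasurable_mk.measurable.enorm
    hψ.stronglyMeasurable_mk.measurable.enorm

theorem MemLp.integrable_mul_of_sq_le_mul [IsFiniteMeasure νf] [IsFiniteMeasure νg]
    (h : ∀ A, MeasurableSet A → τ A ^ 2 ≤ νf A * νg A)
    {φ ψ : K → ℝ} (hφ : MemLp φ 2 νf) (hψ : MemLp ψ 2 νg) : Integrable (φ * ψ) τ :=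
  memLp_one_iff_integrable.1
    ⟨(hφ.1.mono_ac (Measure.absolutelyContinuous_left_of_sq_le_mul h)).mul
      (hψ.1.mono_ac (Measure.absolutelyContinuous_right_of_sq_le_mul h)),
      (eLpNorm_mul_le_of_sq_le_mul h hφ.1 hψ.1).trans_lt (ENNReal.mul_lt_top hφ.2 hψ.2)⟩

theorem MemLp.integral_abs_mul_le_of_sq_le_mul [IsFiniteMeasure νf] [IsFiniteMeasure νg]
    (h : ∀ A, MeasurableSet A → τ A ^ 2 ≤ νf A * νg A)
    {φ ψ : K → ℝ} (hφ : MemLp φ 2 νf) (hψ : MemLp ψ 2 νg) :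
    ∫ x, |φ x * ψ x| ∂τ ≤ √(∫ x, φ x ^ 2 ∂νf) * √(∫ x, ψ x ^ 2 ∂νg) := by
  rw [← hφ.toReal_eLpNorm_two, ← hψ.toReal_eLpNorm_two, ← ENNReal.toReal_mul]
  simp only [← Real.norm_eq_abs]
  rw [integral_norm_eq_lintegral_enorm (f := fun x => φ x * ψ x)
      (hφ.integrable_mul_of_sq_le_mul h hψ).1,
    ← eLpNorm_one_eq_lintegral_enorm]
  exact ENNReal.toReal_mono (ENNReal.mul_ne_top hφ.2.ne hψ.2.ne)
    (eLpNorm_mul_le_of_sq_le_mul h hφ.1 hψ.1)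

end SqLeMul

end MeasureTheory

theorem stmt_15 {K : Type*} [MeasurableSpace K]
    (νf νg : Measure K) [IsFiniteMeasure νf] [IsFiniteMeasure νg]
    (σ : SignedMeasure K)
    (hCS : ∀ A : Set K, MeasurableSet A →
      |σ A| ≤ Real.sqrt (νf A).toReal * Real.sqrt (νg A).toReal)
    (φ ψ : K → ℝ) (hφ : MemLp φ 2 νf) (hψ : MemLp ψ 2 νg) :
    Integrable (fun x => φ x * ψ x) σ.totalVariation ∧
    |(∫ x, φ x * ψ x ∂σ.toJordanDecomposition.posPart) -
        ∫ x, φ x * ψ x ∂σ.toJordanDecomposition.negPart|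
      ≤ Real.sqrt (∫ x, (φ x) ^ 2 ∂νf) * Real.sqrt (∫ x, (ψ x) ^ 2 ∂νg) := by
  have hτ (A : Set K) (hA : MeasurableSet A) : σ.totalVariation A ^ 2 ≤ νf A * νg A :=
    SignedMeasure.totalVariation_sq_le_mul hCS hA
  have hint : Integrable (fun x => φ x * ψ x) σ.totalVariation :=
    hφ.integrable_mul_of_sq_le_mul hτ hψ
  refine ⟨hint, ?_⟩
  calc _ ≤ ∫ x, |φ x * ψ x| ∂σ.totalVariation :=
        abs_integral_sub_integral_le_integral_abs_add_measure hint
    _ ≤ _ := hφ.integral_abs_mul_le_of_sq_le_mul hτ hψ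
end
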